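/- arXiv:2006.09123 — 6 statements merged into one kernel-verified Lean document; each statement's English description precedes it below -/
import Mathlib

section
/- For λ ∈ (0,1], the ski rental algorithm that buys on day ⌈λb⌉ when the prediction h > b, and buys on day ⌈b/λ⌉ when h ≤ b, has competitive ratio at most 1 + min(1/λ, λ + η/((1-λ)·OPT)), where η = |h - d*| and OPT = min(d*, b). -/
/-- The day on which the λ-robust ski rental algorithm buys:
day `⌈λb⌉` if the prediction `h` exceeds `b`, day `⌈b/λ⌉` otherwise. -/
noncomputable def buyDay (lam : ℝ) (b h : ℕ) : ℕ :=
  if b < h then ⌈lam * b⌉₊ else ⌈(b : ℝ) / lam⌉₊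

/-- Total cost of an algorithm that buys on day `k` when the true number of
ski days is `d`: if `d ≥ k` it rents `k - 1` days and buys (cost `k - 1 + b`),
otherwise it rents every day (cost `d`). -/
def skiCost (k b d : ℕ) : ℕ := if k ≤ d then (k - 1) + b else d

/-! Buying on day `k` costs at most `(1 + c)·OPT` as soon as `b ≤ c·k` and `k - 1 ≤ c·b`; for
`c = 1/λ` both days `⌈λb⌉ ≤ b` and `⌈b/λ⌉ ≥ b` qualify, which is the robustness term `1/λ`.
For the consistency term, a day `k` with `k - 1 ≤ λb` costs at most `(1 + λ)·OPT` unless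
`d < b < h`, and then the overshoot `(1 + λ)(b - d)` is paid for by `η/(1 - λ) ≥ (b - d)/(1 - λ)`,
as `(1 + λ)(1 - λ) ≤ 1`; a day `k` with `b ≤ λk` is only reached when `η ≥ k - h ≥ (1 - λ)k`. -/

section

variable {k b d h : ℕ} {lam c : ℝ}

theorem skiCost_of_lt (hdk : d < k) : skiCost k b d = d :=
  if_neg (not_le.mpr hdk)

theorem skiCost_cast_of_le (hk : 1 ≤ k) (hkd : k ≤ d) : (skiCost k b d : ℝ) = k - 1 + b := by
  rw [skiCost, if_pos hkd]
  push_cast [Nat.cast_sub hk]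
  ring

theorem skiCost_le_one_add_mul_min (hc : 0 ≤ c) (hk : 1 ≤ k) (hbk : (b : ℝ) ≤ c * k)
    (hkb : (k : ℝ) - 1 ≤ c * b) : (skiCost k b d : ℝ) ≤ (1 + c) * (min d b : ℕ) := by
  have hd : (0 : ℝ) ≤ d := d.cast_nonneg
  have hb : (0 : ℝ) ≤ b := b.cast_nonneg
  rcases lt_or_ge d k with hdk | hkd
  · have hdk' : (d : ℝ) ≤ k - 1 := by
      have : (d : ℝ) + 1 ≤ k := by exact_mod_cast hdk
      linarith
    rw [skiCost_of_lt hdk]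
    rcases le_total d b with hdb | hbd
    · rw [min_eq_left hdb]; nlinarith
    · rw [min_eq_right hbd]; nlinarith
  · have hkd' : (k : ℝ) ≤ d := by exact_mod_cast hkd
    rw [skiCost_cast_of_le hk hkd]
    rcases le_total d b with hdb | hbd
    · rw [min_eq_left hdb]; nlinarith
    · rw [min_eq_right hbd]; nlinarith

theorem skiCost_le_of_sub_one_le_mul (hlam0 : 0 ≤ lam) (hlam1 : lam < 1) (hk : 1 ≤ k)
    (hkb : k ≤ b) (hk1 : (k : ℝ) - 1 ≤ lam * b) (hbh : b < h) :
    (skiCost k b d : ℝ) ≤ (1 + lam) * (min d b : ℕ) + |(h : ℝ) - d| / (1 - lam) := by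
  have hη : 0 ≤ |(h : ℝ) - d| / (1 - lam) := div_nonneg (abs_nonneg _) (by linarith)
  rcases lt_or_ge d k with hdk | hkd
  · rw [skiCost_of_lt hdk, min_eq_left (hdk.le.trans hkb)]
    nlinarith [d.cast_nonneg (α := ℝ)]
  · rw [skiCost_cast_of_le hk hkd]
    rcases le_total b d with hbd | hdb
    · rw [min_eq_right hbd]; linarith
    · have hdb' : (d : ℝ) ≤ b := by exact_mod_cast hdb
      have hhb : (b : ℝ) < h := by exact_mod_cast hbh
      have hgap : (1 + lam) * (b - d) ≤ |(h : ℝ) - d| / (1 - lam) := by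
        rw [le_div_iff₀ (by linarith), abs_of_pos (by linarith)]
        nlinarith [mul_nonneg (sq_nonneg lam) (sub_nonneg.mpr hdb')]
      rw [min_eq_left hdb]
      linarith

theorem skiCost_le_of_le_mul (hlam0 : 0 ≤ lam) (hlam1 : lam < 1) (hk : 1 ≤ k)
    (hbk : (b : ℝ) ≤ lam * k) (hhb : h ≤ b) :
    (skiCost k b d : ℝ) ≤ (1 + lam) * (min d b : ℕ) + |(h : ℝ) - d| / (1 - lam) := by
  have hhb' : (h : ℝ) ≤ b := by exact_mod_cast hhb
  have hbk' : b < k := by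
    have : (1 : ℝ) ≤ k := by exact_mod_cast hk
    exact_mod_cast hbk.trans_lt (by nlinarith : lam * k < k)
  rcases le_total d b with hdb | hbd
  · have hη : 0 ≤ |(h : ℝ) - d| / (1 - lam) := div_nonneg (abs_nonneg _) (by linarith)
    rw [skiCost_of_lt (hdb.trans_lt hbk'), min_eq_left hdb]
    nlinarith [d.cast_nonneg (α := ℝ)]
  · have hbd' : (b : ℝ) ≤ d := by exact_mod_cast hbd
    have hη : |(h : ℝ) - d| = d - h := by rw [abs_sub_comm, abs_of_nonneg (by linarith)]
    rw [min_eq_right hbd, hη]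
    rcases lt_or_ge d k with hdk | hkd
    · have : (d : ℝ) - b ≤ (d - h) / (1 - lam) := by
        rw [le_div_iff₀ (by linarith)]; nlinarith
      rw [skiCost_of_lt hdk]
      nlinarith
    · have hkd' : (k : ℝ) ≤ d := by exact_mod_cast hkd
      have : (k : ℝ) ≤ (d - h) / (1 - lam) := by
        rw [le_div_iff₀ (by linarith)]; nlinarith
      rw [skiCost_cast_of_le hk hkd]
      nlinarith

theorem buyDay_of_lt (hbh : b < h) : buyDay lam b h = ⌈lam * b⌉₊ := if_pos hbh

theorem buyDay_of_le (hhb : h ≤ b) : buyDay lam b h = ⌈(b : ℝ) / lam⌉₊ :=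
  if_neg (not_lt.mpr hhb)

theorem one_le_buyDay (hlam0 : 0 < lam) (hb : 1 ≤ b) : 1 ≤ buyDay lam b h := by
  have hb' : (0 : ℝ) < b := by exact_mod_cast hb
  unfold buyDay
  split_ifs <;> exact Nat.ceil_pos.mpr (by positivity)

theorem skiCost_buyDay_robust (hlam0 : 0 < lam) (hlam1 : lam ≤ 1) (hb : 1 ≤ b) :
    (skiCost (buyDay lam b h) b d : ℝ) ≤ (1 + 1 / lam) * (min d b : ℕ) := by
  have hb' : (1 : ℝ) ≤ b := by exact_mod_cast hb
  have hc : 0 ≤ 1 / lam := by positivity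
  have hk := one_le_buyDay (h := h) hlam0 hb
  rcases lt_or_ge b h with hbh | hhb
  · rw [buyDay_of_lt hbh] at hk ⊢
    have hlo : lam * b ≤ ⌈lam * b⌉₊ := Nat.le_ceil _
    have hhi : (⌈lam * b⌉₊ : ℝ) ≤ b := by exact_mod_cast Nat.ceil_le.mpr (by nlinarith)
    refine skiCost_le_one_add_mul_min hc hk ?_ ?_
    · rw [one_div_mul_eq_div, le_div_iff₀ hlam0]; linarith
    · rw [one_div_mul_eq_div, le_div_iff₀ hlam0]; nlinarith
  · rw [buyDay_of_le hhb] at hk ⊢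
    have hlo : (b : ℝ) / lam ≤ ⌈(b : ℝ) / lam⌉₊ := Nat.le_ceil _
    have hhi : (⌈(b : ℝ) / lam⌉₊ : ℝ) < b / lam + 1 := Nat.ceil_lt_add_one (by positivity)
    refine skiCost_le_one_add_mul_min hc hk ?_ ?_
    · rw [one_div_mul_eq_div, le_div_iff₀ hlam0]
      rw [div_le_iff₀ hlam0] at hlo
      nlinarith
    · rw [one_div_mul_eq_div]; linarith

theorem skiCost_buyDay_consistent (hlam0 : 0 < lam) (hlam1 : lam < 1) (hb : 1 ≤ b) :
    (skiCost (buyDay lam b h) b d : ℝ) ≤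
      (1 + lam) * (min d b : ℕ) + |(h : ℝ) - d| / (1 - lam) := by
  have hb' : (1 : ℝ) ≤ b := by exact_mod_cast hb
  have hk := one_le_buyDay (h := h) hlam0 hb
  rcases lt_or_ge b h with hbh | hhb
  · rw [buyDay_of_lt hbh] at hk ⊢
    refine skiCost_le_of_sub_one_le_mul hlam0.le hlam1 hk
      (Nat.ceil_le.mpr (by nlinarith)) ?_ hbh
    linarith [Nat.ceil_lt_add_one (mul_nonneg hlam0.le (b.cast_nonneg (α := ℝ)))]
  · rw [buyDay_of_le hhb] at hk ⊢
    refine skiCost_le_of_le_mul hlam0.le hlam1 hk ?_ hhb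
    exact (div_le_iff₀' hlam0).mp (Nat.le_ceil _)

end

/-- Ski rental with predictions: for `λ ∈ (0,1]`, buying on day `⌈λb⌉` when
`h > b` and on day `⌈b/λ⌉` otherwise achieves competitive ratio at most
`1 + min(1/λ, λ + η/((1-λ)·OPT))`, where `η = |h - d*|` and `OPT = min(d*, b)`
(with the convention that for `λ = 1` the second term is read as `1/λ`). -/
theorem ski_rental_lambda_competitive (lam : ℝ) (hlam0 : 0 < lam) (hlam1 : lam ≤ 1)
    (b d h : ℕ) (hb : 1 ≤ b) :
    (skiCost (buyDay lam b h) b d : ℝ) ≤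
      (1 + min (1 / lam)
          (if lam = 1 then 1 / lam
           else lam + |(h : ℝ) - d| / ((1 - lam) * (min d b : ℕ)))) * (min d b : ℕ) := by
  have robust := skiCost_buyDay_robust (h := h) (d := d) hlam0 hlam1 hb
  rw [← min_add_add_left, min_mul_of_nonneg _ _ (Nat.cast_nonneg _)]
  refine le_min robust ?_
  split_ifs with hlam
  · exact robust
  have hlt : lam < 1 := lt_of_le_of_ne hlam1 hlam
  rcases eq_or_ne ((min d b : ℕ) : ℝ) 0 with hO | hO
  · simpa [hO] using robust
  calc (skiCost (buyDay lam b h) b d : ℝ)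
      ≤ (1 + lam) * (min d b : ℕ) + |(h : ℝ) - d| / (1 - lam) :=
        skiCost_buyDay_consistent hlam0 hlt hb
    _ = _ := by field_simp [sub_ne_zero.mpr (Ne.symm hlam)]; ring
end

section
/- In the caching problem with cache size k, for any request sequence partitioned into marking phases, the number of cache misses of the optimal offline algorithm satisfies OPT ≥ (1/2)·Σᵢ Cᵢ, where Cᵢ is the number of clean elements in phase i. -/
/-!
Fix two consecutive phases `i` and `i + 1`. They request `k + Cᵢ₊₁` distinct pages, since phase `i`
requests `k` of them and the clean pages of phase `i + 1` are the others. At the start of phase `i`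
at most `k` pages are cached, and the first request to any other page is a miss, so the two phases
contain at least `Cᵢ₊₁` misses. Phase `0` starts with an empty cache and contains at least `C₀`
misses. Summing these bounds counts each phase at most twice.
-/

/-- The set of pages requested during phase `i`, where phase `i` consists of
the requests at times `t i, t i + 1, ..., t (i+1) - 1`. -/
def phasePages (r : ℕ → ℕ) (t : ℕ → ℕ) (i : ℕ) : Finset ℕ :=
  (Finset.Ico (t i) (t (i + 1))).image r

/-- The number of clean elements of phase `i`: pages requested in phase `i`
that were not requested in phase `i - 1` (for `i = 0` every page is clean). -/
def cleanCount (r : ℕ → ℕ) (t : ℕ → ℕ) : ℕ → ℕ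
  | 0 => (phasePages r t 0).card
  | (i + 1) => ((phasePages r t (i + 1)) \ (phasePages r t i)).card

open Finset

def missTimes (r : ℕ → ℕ) (C : ℕ → Finset ℕ) (a b : ℕ) : Finset ℕ :=
  {s ∈ Ico a b | r s ∉ C s}

section Schedule

variable {r : ℕ → ℕ} {C : ℕ → Finset ℕ} {a b : ℕ}

lemma cache_subset_union_image_Ico (hab : a ≤ b)
    (hevict : ∀ s < b, C (s + 1) ⊆ insert (r s) (C s)) :
    C b ⊆ C a ∪ (Ico a b).image r := by
  induction b, hab using Nat.le_induction with
  | base => simp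
  | succ b hab ih =>
    calc C (b + 1) ⊆ insert (r b) (C b) := hevict b b.lt_succ_self
      _ ⊆ insert (r b) (C a ∪ (Ico a b).image r) :=
        insert_subset_insert _ (ih fun s hs => hevict s (hs.trans b.lt_succ_self))
      _ = C a ∪ (Ico a (b + 1)).image r := by
        rw [Nat.Ico_succ_right_eq_insert_Ico hab, image_insert, union_insert]

lemma image_Ico_subset_union_image_missTimes (hab : a ≤ b)
    (hevict : ∀ s < b, C (s + 1) ⊆ insert (r s) (C s)) :
    (Ico a b).image r ⊆ C a ∪ (missTimes r C a b).image r := by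
  induction b, hab using Nat.le_induction with
  | base => simp
  | succ b hab ih =>
    have ih := ih fun s hs => hevict s (hs.trans b.lt_succ_self)
    have hmiss : missTimes r C a b ⊆ missTimes r C a (b + 1) :=
      filter_subset_filter _ (Ico_subset_Ico_right b.le_succ)
    have hgrow := ih.trans (union_subset_union_right (image_subset_image hmiss))
    rw [Nat.Ico_succ_right_eq_insert_Ico hab, image_insert, insert_subset_iff]
    refine ⟨?_, hgrow⟩
    -- a hit on a page absent from `C a` is on a page already requested in `[a, b)`
    by_cases hhit : r b ∈ C b
    · have hold := cache_subset_union_image_Ico hab fun s hs => hevict s (hs.trans b.lt_succ_self)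
      exact union_subset subset_union_left hgrow (hold hhit)
    · exact mem_union_right _ (mem_image_of_mem r (by simp [missTimes, hab, hhit]))

lemma card_image_Ico_le_card_add_card_missTimes (hab : a ≤ b)
    (hevict : ∀ s < b, C (s + 1) ⊆ insert (r s) (C s)) :
    #((Ico a b).image r) ≤ #(C a) + #(missTimes r C a b) :=
  calc #((Ico a b).image r) ≤ #(C a ∪ (missTimes r C a b).image r) :=
        card_le_card (image_Ico_subset_union_image_missTimes hab hevict)
    _ ≤ #(C a) + #((missTimes r C a b).image r) := card_union_le _ _
    _ ≤ #(C a) + #(missTimes r C a b) := Nat.add_le_add_left card_image_le _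

lemma card_missTimes_add_card_missTimes {c : ℕ} (hab : a ≤ b) (hbc : b ≤ c) :
    #(missTimes r C a b) + #(missTimes r C b c) = #(missTimes r C a c) := by
  rw [missTimes, missTimes, missTimes, ← Ico_union_Ico_eq_Ico hab hbc, filter_union,
    card_union_of_disjoint (disjoint_filter_filter (Ico_disjoint_Ico_consecutive a b c))]

end Schedule

lemma sum_card_missTimes_phases {r : ℕ → ℕ} {C : ℕ → Finset ℕ} {t : ℕ → ℕ} {m : ℕ}
    (ht : MonotoneOn t (Set.Iic m)) :
    ∑ i ∈ range m, #(missTimes r C (t i) (t (i + 1))) = #(missTimes r C (t 0) (t m)) := by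
  induction m with
  | zero => simp [missTimes]
  | succ m ih =>
    have hm : m ∈ Set.Iic (m + 1) := Set.mem_Iic.2 m.le_succ
    have h0m : t 0 ≤ t m := ht (Set.mem_Iic.2 (Nat.zero_le _)) hm m.zero_le
    have hmsucc : t m ≤ t (m + 1) := ht hm Set.self_mem_Iic m.le_succ
    rw [sum_range_succ, ih (ht.mono (Set.Iic_subset_Iic.2 m.le_succ)),
      card_missTimes_add_card_missTimes h0m hmsucc]

lemma cleanCount_zero_le_card_missTimes {r : ℕ → ℕ} {C : ℕ → Finset ℕ} {t : ℕ → ℕ}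
    (ht : t 0 ≤ t 1) (hC : C (t 0) = ∅)
    (hevict : ∀ s < t 1, C (s + 1) ⊆ insert (r s) (C s)) :
    cleanCount r t 0 ≤ #(missTimes r C (t 0) (t 1)) := by
  simpa [cleanCount, phasePages, hC] using card_image_Ico_le_card_add_card_missTimes ht hevict

lemma cleanCount_succ_le_card_missTimes_add {r : ℕ → ℕ} {C : ℕ → Finset ℕ} {t : ℕ → ℕ}
    {k i : ℕ} (ht₁ : t i ≤ t (i + 1)) (ht₂ : t (i + 1) ≤ t (i + 2))
    (hphase : #(phasePages r t i) = k) (hsize : #(C (t i)) ≤ k)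
    (hevict : ∀ s < t (i + 2), C (s + 1) ⊆ insert (r s) (C s)) :
    cleanCount r t (i + 1) ≤
      #(missTimes r C (t i) (t (i + 1))) + #(missTimes r C (t (i + 1)) (t (i + 2))) := by
  have hunion : phasePages r t i ∪ phasePages r t (i + 1) = (Ico (t i) (t (i + 2))).image r := by
    rw [phasePages, phasePages, ← image_union, Ico_union_Ico_eq_Ico ht₁ ht₂]
  have hcard := card_sdiff_add_card (phasePages r t (i + 1)) (phasePages r t i)
  have hbound := card_image_Ico_le_card_add_card_missTimes (ht₁.trans ht₂) hevict
  rw [union_comm, hunion] at hcard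
  rw [← card_missTimes_add_card_missTimes ht₁ ht₂] at hbound
  rw [cleanCount]
  omega

lemma sum_range_le_two_mul_sum_of_le_add_prev {c f : ℕ → ℕ} {m : ℕ} (h₀ : c 0 ≤ f 0)
    (hsucc : ∀ i, i + 1 < m → c (i + 1) ≤ f i + f (i + 1)) :
    ∑ i ∈ range m, c i ≤ 2 * ∑ i ∈ range m, f i := by
  obtain _ | m := m
  · simp
  have hpartial : ∀ j ≤ m,
      ∑ i ∈ range (j + 1), c i ≤ ∑ i ∈ range j, f i + ∑ i ∈ range (j + 1), f i := by
    intro j hj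
    induction j with
    | zero => simpa using h₀
    | succ j ih =>
      have := ih (by omega)
      have := hsucc j (by omega)
      have := sum_range_succ f j
      rw [sum_range_succ c, sum_range_succ f (j + 1)]
      omega
  have := hpartial m le_rfl
  have := sum_range_succ f m
  omega

theorem caching_clean_lower_bound_general
    (k n m : ℕ) (r : ℕ → ℕ) (t : ℕ → ℕ)
    (ht0 : t 0 = 0) (htm : t m = n)
    (hmono : ∀ i < m, t i < t (i + 1))
    -- each phase contains exactly k distinct pages
    (hphase : ∀ i < m, (phasePages r t i).card = k)
    -- an arbitrary offline cache schedule
    (C : ℕ → Finset ℕ)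
    (hinit : C 0 = ∅)
    (hsize : ∀ s, (C s).card ≤ k)
    (hevict : ∀ s < n, C (s + 1) ⊆ insert (r s) (C s)) :
    (∑ i ∈ Finset.range m, cleanCount r t i) ≤
      2 * ((Finset.range n).filter (fun s => r s ∉ C s)).card := by
  have ht : MonotoneOn t (Set.Iic m) := (strictMonoOn_Iic_of_lt_succ hmono).monotoneOn
  have hevict_before : ∀ j ≤ m, ∀ s < t j, C (s + 1) ⊆ insert (r s) (C s) := fun j hj s hs =>
    hevict s (htm ▸ hs.trans_le (ht (Set.mem_Iic.2 hj) Set.self_mem_Iic hj))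
  have hstep : ∀ i, i + 1 ≤ m → t i ≤ t (i + 1) := fun i hi =>
    ht (Set.mem_Iic.2 (by omega)) (Set.mem_Iic.2 hi) i.le_succ
  have hmisses : (range n).filter (fun s => r s ∉ C s) = missTimes r C (t 0) (t m) := by
    rw [ht0, htm, missTimes, range_eq_Ico]
  rw [hmisses, ← sum_card_missTimes_phases ht]
  obtain _ | m := m
  · simp
  refine sum_range_le_two_mul_sum_of_le_add_prev ?_ fun i hi => ?_
  · exact cleanCount_zero_le_card_missTimes (hstep 0 (by omega)) (by rw [ht0, hinit])
      (hevict_before 1 (by omega))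
  · exact cleanCount_succ_le_card_missTimes_add (hstep i (by omega)) (hstep (i + 1) hi)
      (hphase i (by omega)) (hsize _) (hevict_before (i + 2) hi)

/-- Lower bound on the optimum for caching: for any request sequence
`r 0, …, r (n-1)` partitioned into marking phases (each phase requests exactly
`k` distinct pages, and phases are maximal), any offline cache schedule `C`
(starting empty, holding at most `k` pages, serving each request, and only
adding the requested page) incurs at least `(1/2) Σᵢ Cᵢ` misses, where `Cᵢ` is
the number of clean elements of phase `i`. -/
theorem caching_clean_lower_bound
    (k n m : ℕ) (hk : 1 ≤ k) (r : ℕ → ℕ) (t : ℕ → ℕ)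
    (ht0 : t 0 = 0) (htm : t m = n)
    (hmono : ∀ i < m, t i < t (i + 1))
    -- each phase contains exactly k distinct pages
    (hphase : ∀ i < m, (phasePages r t i).card = k)
    -- maximality: the first request of the next phase is new to the current phase
    (hmax : ∀ i, i + 1 < m → r (t (i + 1)) ∉ phasePages r t i)
    -- an arbitrary offline cache schedule
    (C : ℕ → Finset ℕ)
    (hinit : C 0 = ∅)
    (hsize : ∀ s, (C s).card ≤ k)
    (hserve : ∀ s < n, r s ∈ C (s + 1))
    (hevict : ∀ s < n, C (s + 1) ⊆ insert (r s) (C s)) :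
    (∑ i ∈ Finset.range m, cleanCount r t i) ≤
      2 * ((Finset.range n).filter (fun s => r s ∉ C s)).card :=
  caching_clean_lower_bound_general k n m r t ht0 htm hmono hphase C hinit hsize hevict
end

section
/- Let L_i for 1 ≤ i ≤ k-1 satisfy the recurrence L_i = 1 + (1/(k-i))·Σ_{j=i+1}^{k-1} L_j with L_{k-1} = 1 (or 0). Then L_1 = Θ(log k); in particular L_1 ≤ H_{k-1} + 1 where H_m is the m-th harmonic number. -/
/-!
Reindexing by the distance `n = k - i` to the end of the chain turns the recurrence into
`M n = 1 + (1/n) · Σ_{1 ≤ m < n} M m` for `1 ≤ n ≤ k - 1` (at `n = 1` this is `L (k-1) = 1`).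
Its solution is the harmonic number `H n`, because `Σ_{m<n} H m = n H n - n`.
Hence `L 1 = H (k-1)` exactly.
-/

open Finset

theorem sum_range_harmonic (n : ℕ) : ∑ m ∈ range n, harmonic m = n * harmonic n - n := by
  induction n with
  | zero => simp
  | succ n ih =>
    rw [sum_range_succ, ih, harmonic_succ]
    push_cast
    field_simp
    ring

theorem eq_harmonic_of_forall_eq_one_add_average {M : ℕ → ℝ} {N : ℕ}
    (hM : ∀ n, 1 ≤ n → n ≤ N → M n = 1 + 1 / n * ∑ m ∈ Ico 1 n, M m) :
    ∀ n, 1 ≤ n → n ≤ N → M n = harmonic n := by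
  intro n
  induction n using Nat.strong_induction_on with
  | _ n ih =>
    intro hn hnN
    have hsum : ∑ m ∈ Ico 1 n, M m = n * harmonic n - n := by
      have hH := sum_range_harmonic n
      rw [range_eq_Ico, sum_eq_sum_Ico_succ_bot (by omega), harmonic_zero, zero_add] at hH
      rw [sum_congr rfl fun m hm => ih m (mem_Ico.1 hm).2 (mem_Ico.1 hm).1
        ((mem_Ico.1 hm).2.le.trans hnN)]
      exact_mod_cast hH
    have hn0 : (n : ℝ) ≠ 0 := by positivity
    rw [hM n hn hnN, hsum]
    field_simp
    ring

/-- The expected eviction-chain length recurrence for the randomized marking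
algorithm: if `L i = 1 + (1/(k-i)) · Σ_{j=i+1}^{k-1} L j` for `1 ≤ i ≤ k-2`
with `L (k-1) = 1`, then `L 1 ≤ H_{k-1} + 1`, where `H_m = Σ_{j=1}^m 1/j` is
the harmonic number (so in particular `L 1 = Θ(log k)`). -/
theorem marking_chain_length (k : ℕ) (hk : 2 ≤ k) (L : ℕ → ℝ)
    (hlast : L (k - 1) = 1)
    (hrec : ∀ i, 1 ≤ i → i ≤ k - 2 →
      L i = 1 + (1 / ((k : ℝ) - i)) * ∑ j ∈ Finset.Ico (i + 1) k, L j) :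
    L 1 ≤ (∑ j ∈ Finset.Icc 1 (k - 1), (1 : ℝ) / j) + 1 := by
  have hM : ∀ n, 1 ≤ n → n ≤ k - 1 →
      L (k - n) = 1 + 1 / n * ∑ m ∈ Ico 1 n, L (k - m) := by
    intro n hn hnk
    obtain rfl | hn2 := hn.eq_or_lt
    · simpa using hlast
    have hreflect : ∑ m ∈ Ico 1 n, L (k - m) = ∑ j ∈ Ico (k - n + 1) k, L j := by
      rw [sum_Ico_reflect L 1 (by omega : n ≤ k + 1), Nat.add_sub_cancel,
        Nat.sub_add_comm (by omega : n ≤ k)]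
    rw [hreflect, hrec (k - n) (by omega) (by omega), Nat.cast_sub (by omega : n ≤ k),
      sub_sub_cancel]
  have hL1 : L 1 = harmonic (k - 1) := by
    simpa [Nat.sub_sub_self (by omega : 1 ≤ k)] using
      eq_harmonic_of_forall_eq_one_add_average hM (k - 1) (by omega) le_rfl
  rw [hL1, harmonic_eq_sum_Icc]
  push_cast
  simp only [one_div]
  linarith
end

section
/- (Diaconis–Graham inequality) For any permutation σ of {1, ..., n}, let I(σ) be the number of inversions of σ and D(σ) = Σᵢ |σ(i) - i| be the total displacement. Then I(σ) ≤ D(σ) ≤ 2·I(σ). -/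
/-!
Write `E j` and `S j` for the numbers of inversions whose larger, resp. smaller, position is `j`.
Comparing `#{x | x < j}` with `#{x | σ x < σ j}` gives `E j + σ j = S j + j`, hence
`|σ j - j| ≤ E j + S j`; summing gives `D ≤ 2 I`, since `∑ E = ∑ S = I`.

For `I ≤ D`, induct on the support. At its least element `i` we have `i < σ i` and
`i < p := σ⁻¹ i`, and `τ := swap i (σ i) * σ = σ * swap p i` fixes `i`. Replacing `σ` by `τ`
lowers `D` by `2 min (σ i - i) (p - i)`, while by subadditivity of `I` it lowers `I` by at most
`I (swap i (σ i))` and by at most `I (swap p i)`, and `I (swap a b) ≤ 2 |b - a|`.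
-/

/-- The number of inversions of a permutation `σ` of `{1, …, n}`:
pairs `i < j` with `σ i > σ j`. -/
def inversions {n : ℕ} (σ : Equiv.Perm (Fin n)) : ℕ :=
  ((Finset.univ : Finset (Fin n × Fin n)).filter
    (fun p => p.1 < p.2 ∧ σ p.2 < σ p.1)).card

/-- The total displacement `D(σ) = Σᵢ |σ(i) - i|` of a permutation. -/
def displacement {n : ℕ} (σ : Equiv.Perm (Fin n)) : ℕ :=
  ∑ i : Fin n, Nat.dist (σ i : ℕ) (i : ℕ)

open Finset Equiv Equiv.Perm

variable {n : ℕ}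

def inversionsEndingAt (σ : Perm (Fin n)) (j : Fin n) : ℕ := #{x | x < j ∧ σ j < σ x}

def inversionsStartingAt (σ : Perm (Fin n)) (i : Fin n) : ℕ := #{y | i < y ∧ σ y < σ i}

theorem sum_inversionsEndingAt (σ : Perm (Fin n)) :
    ∑ j, inversionsEndingAt σ j = inversions σ := by
  simp only [inversions, inversionsEndingAt, card_filter, Fintype.sum_prod_type_right]

theorem sum_inversionsStartingAt (σ : Perm (Fin n)) :
    ∑ i, inversionsStartingAt σ i = inversions σ := by
  simp only [inversions, inversionsStartingAt, card_filter, Fintype.sum_prod_type]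

theorem card_filter_apply_lt (σ : Perm (Fin n)) (v : Fin n) : #{x | σ x < v} = v := by
  rw [card_filter, Equiv.sum_comp σ (fun y => if y < v then 1 else 0), ← card_filter,
    filter_gt_eq_Iio, Fin.card_Iio]

theorem inversionsEndingAt_add_apply (σ : Perm (Fin n)) (j : Fin n) :
    inversionsEndingAt σ j + σ j = inversionsStartingAt σ j + j := by
  rw [← card_filter_apply_lt σ (σ j), ← Fin.card_Iio j, ← filter_gt_eq_Iio]
  simp only [inversionsEndingAt, inversionsStartingAt, card_filter, ← sum_add_distrib]
  refine sum_congr rfl fun x _ => ?_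
  have hinj := σ.injective.eq_iff (a := x) (b := j)
  split_ifs <;> grind

theorem dist_apply_le (σ : Perm (Fin n)) (j : Fin n) :
    Nat.dist (σ j) j ≤ inversionsEndingAt σ j + inversionsStartingAt σ j := by
  have := inversionsEndingAt_add_apply σ j
  unfold Nat.dist
  omega

theorem displacement_le_two_mul_inversions (σ : Perm (Fin n)) :
    displacement σ ≤ 2 * inversions σ :=
  calc displacement σ ≤ ∑ j, (inversionsEndingAt σ j + inversionsStartingAt σ j) :=
        sum_le_sum fun j _ => dist_apply_le σ j
    _ = 2 * inversions σ := by
        rw [sum_add_distrib, sum_inversionsEndingAt, sum_inversionsStartingAt, two_mul]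

def inversionSet (σ : Perm (Fin n)) : Finset (Fin n × Fin n) := {p | p.1 < p.2 ∧ σ p.2 < σ p.1}

theorem card_inversionSet (σ : Perm (Fin n)) : #(inversionSet σ) = inversions σ := rfl

theorem inversions_one : inversions (1 : Perm (Fin n)) = 0 :=
  card_eq_zero.mpr (filter_eq_empty_iff.mpr fun _ _ h => lt_asymm h.1 h.2)

theorem inversionSet_mul_subset (α β : Perm (Fin n)) :
    inversionSet (α * β) ⊆ inversionSet β ∪ (inversionSet α).image (Prod.map ⇑β⁻¹ ⇑β⁻¹) := by
  rintro ⟨x, y⟩ hxy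
  simp only [inversionSet, mem_filter_univ, mul_apply] at hxy
  rcases lt_trichotomy (β x) (β y) with h | h | h
  · refine mem_union_right _ (mem_image.mpr ⟨(β x, β y), ?_, by simp⟩)
    simpa [inversionSet] using ⟨h, hxy.2⟩
  · exact absurd (β.injective h) hxy.1.ne
  · exact mem_union_left _ (by simpa [inversionSet] using ⟨hxy.1, h⟩)

theorem inversions_mul_le (α β : Perm (Fin n)) :
    inversions (α * β) ≤ inversions α + inversions β := by
  simp only [← card_inversionSet]
  calc #(inversionSet (α * β))
      _ ≤ #(inversionSet β ∪ (inversionSet α).image (Prod.map ⇑β⁻¹ ⇑β⁻¹)) :=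
        card_le_card (inversionSet_mul_subset α β)
      _ ≤ #(inversionSet β) + #(inversionSet α) :=
        (card_union_le _ _).trans (Nat.add_le_add_left card_image_le _)
      _ = _ := add_comm _ _

theorem inversionSet_swap_subset {a b : Fin n} (hab : a ≤ b) :
    inversionSet (swap a b) ⊆ (Ioc a b).image (a, ·) ∪ (Ico a b).image (·, b) := by
  rintro ⟨x, y⟩ hxy
  rw [inversionSet, mem_filter_univ] at hxy
  simp only [swap_apply_def] at hxy
  simp only [mem_union, mem_image, mem_Ioc, mem_Ico, Prod.mk.injEq]
  split_ifs at hxy <;> grind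

theorem inversions_swap_le (a b : Fin n) : inversions (swap a b) ≤ 2 * Nat.dist a b := by
  wlog hab : a ≤ b generalizing a b
  · rw [swap_comm, Nat.dist_comm]; exact this b a (le_of_not_ge hab)
  rw [← card_inversionSet, Nat.dist_eq_sub_of_le (Fin.le_def.mp hab), two_mul]
  calc #(inversionSet (swap a b))
      _ ≤ #((Ioc a b).image (a, ·) ∪ (Ico a b).image (·, b)) :=
        card_le_card (inversionSet_swap_subset hab)
      _ ≤ #(Ioc a b) + #(Ico a b) :=
        (card_union_le _ _).trans (add_le_add card_image_le card_image_le)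
      _ = _ := by rw [Fin.card_Ioc, Fin.card_Ico]

theorem displacement_swap_mul (σ : Perm (Fin n)) {x : Fin n} (hx : σ x ≠ x) :
    displacement σ + Nat.dist (σ x) (σ⁻¹ x) =
      displacement (swap x (σ x) * σ) + Nat.dist (σ x) x + Nat.dist x (σ⁻¹ x) := by
  have hxp : x ≠ σ⁻¹ x := fun h => hx (eq_inv_iff_eq.mp h)
  have split (ρ : Perm (Fin n)) : displacement ρ =
      Nat.dist (ρ x) x + Nat.dist (ρ (σ⁻¹ x)) (σ⁻¹ x) + ∑ y ∈ {x, σ⁻¹ x}ᶜ, Nat.dist (ρ y) y := by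
    rw [displacement, ← sum_add_sum_compl {x, σ⁻¹ x}, sum_pair hxp]
  have hrest : ∑ y ∈ {x, σ⁻¹ x}ᶜ, Nat.dist ((swap x (σ x) * σ) y) y =
      ∑ y ∈ {x, σ⁻¹ x}ᶜ, Nat.dist (σ y) y := by
    refine sum_congr rfl fun y hy => ?_
    simp only [mem_compl, mem_insert, mem_singleton, not_or] at hy
    rw [mul_apply, swap_apply_of_ne_of_ne (fun h => hy.2 (eq_inv_iff_eq.mpr h))
      (fun h => hy.1 (σ.injective h))]
  have h_x : (swap x (σ x) * σ) x = x := by rw [mul_apply, swap_apply_right]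
  have h_p : (swap x (σ x) * σ) (σ⁻¹ x) = σ x := by
    rw [mul_apply, coe_inv, apply_symm_apply, swap_apply_left]
  have h_σp : σ (σ⁻¹ x) = x := σ.apply_symm_apply x
  rw [split σ, split (swap x (σ x) * σ), hrest, h_x, h_p, h_σp, Nat.dist_self]
  omega

theorem min'_support_lt_apply {α : Type*} [Fintype α] [DecidableEq α] [LinearOrder α]
    (σ : Perm α) (h : σ.support.Nonempty) : σ.support.min' h < σ (σ.support.min' h) :=
  lt_of_le_of_ne (min'_le _ _ (apply_mem_support.mpr (min'_mem _ h)))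
    (mem_support.mp (min'_mem _ h)).symm

theorem inversions_le_displacement (σ : Perm (Fin n)) : inversions σ ≤ displacement σ := by
  obtain hσ | hσ := σ.support.eq_empty_or_nonempty
  · simp [support_eq_empty_iff.mp hσ, inversions_one]
  set i := σ.support.min' hσ
  have hi : i < σ i := min'_support_lt_apply σ hσ
  have hi' : i < σ⁻¹ i := by
    simpa only [i, support_inv] using min'_support_lt_apply σ⁻¹ (by rwa [support_inv])
  have hτ : swap i (σ i) * σ = σ * swap (σ⁻¹ i) i := by
    rw [swap_mul_eq_mul_swap, coe_inv, symm_apply_apply]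
  have ih := inversions_le_displacement (swap i (σ i) * σ)
  have h_left : inversions σ ≤ inversions (swap i (σ i) * σ) + 2 * Nat.dist i (σ i) := by
    calc inversions σ = inversions (swap i (σ i) * (swap i (σ i) * σ)) := by
          rw [swap_mul_self_mul]
      _ ≤ _ := (inversions_mul_le _ _).trans
          (by rw [add_comm]; gcongr; exact inversions_swap_le _ _)
  have h_right : inversions σ ≤ inversions (swap i (σ i) * σ) + 2 * Nat.dist (σ⁻¹ i) i := by
    calc inversions σ = inversions (swap i (σ i) * σ * swap (σ⁻¹ i) i) := by
          rw [hτ, mul_swap_mul_self]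
      _ ≤ _ := (inversions_mul_le _ _).trans (by gcongr; exact inversions_swap_le _ _)
  have h_disp := displacement_swap_mul σ hi.ne'
  rw [Fin.lt_def] at hi hi'
  unfold Nat.dist at *
  omega
termination_by σ.support.card
decreasing_by exact card_support_swap_mul hi.ne'

/-- Diaconis–Graham inequality: `I(σ) ≤ D(σ) ≤ 2·I(σ)` for every permutation
`σ`, where `I` counts inversions and `D` is the total displacement. -/
theorem diaconis_graham {n : ℕ} (σ : Equiv.Perm (Fin n)) :
    inversions σ ≤ displacement σ ∧ displacement σ ≤ 2 * inversions σ :=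
  ⟨inversions_le_displacement σ, displacement_le_two_mul_inversions σ⟩
end

section
/- In the two-type scheduling model with misclassification probabilities p (short predicted long) and q (long predicted short), shortest-predicted-job-first (random order within predicted classes, jobs predicted short before jobs predicted long) has expected total waiting time equal to the stated four-term expression; in particular when p = q = 0 it equals the shortest-job-first optimum, and its expected waiting time is a nondecreasing function of p and of q. -/
/-! By linearity of expectation the expected total wait is a sum over ordered pairs `(i, j)`
of the processing time of `i` times the probability that `i` is served before `j`. Given the predicted labels,
random tie-breaking makes this probability `1`, `0` or `1/2`, i.e. `(1 + [j long] - [i long]) / 2`,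
which is affine in the labels; averaging over the independent labels therefore only needs the
probability `μ k` that each job is predicted long, giving `(1 + μ j - μ i) / 2`. Summing over the
pairs yields the shortest-job-first cost plus `ns * nl * (l - s) * (p + q) / 2`. -/

/-- Processing time of job `i`: the first `ns` jobs are short (length `s`),
the remaining `nl` are long (length `l`). -/
noncomputable def jobTime (ns nl : ℕ) (s l : ℝ) (i : Fin (ns + nl)) : ℝ :=
  if (i : ℕ) < ns then s else l

/-- Probability of a label assignment `ℓ` (`true` = predicted long): each
short job is independently predicted long with probability `p`, and each long
job is predicted short with probability `q`. -/
noncomputable def labelWeight (ns nl : ℕ) (p q : ℝ) (ℓ : Fin (ns + nl) → Bool) : ℝ :=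
  ∏ i : Fin (ns + nl),
    if (i : ℕ) < ns then (if ℓ i then p else 1 - p)
    else (if ℓ i then 1 - q else q)

/-- Total waiting time under shortest-predicted-job-first: jobs predicted
short precede jobs predicted long, and ties within a predicted class are
broken by the permutation `σ`; job `j` waits for the processing times of all
jobs preceding it. -/
noncomputable def spjfWait (ns nl : ℕ) (s l : ℝ) (ℓ : Fin (ns + nl) → Bool)
    (σ : Equiv.Perm (Fin (ns + nl))) : ℝ :=
  ∑ j : Fin (ns + nl),
    ∑ i ∈ Finset.univ.filter
        (fun i => (ℓ i = false ∧ ℓ j = true) ∨ (ℓ i = ℓ j ∧ σ i < σ j)),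
      jobTime ns nl s l i

/-- Expected total waiting time of shortest-predicted-job-first: expectation
over the random predicted labels and a uniformly random order within each
predicted class. -/
noncomputable def spjfExpectedWait (ns nl : ℕ) (s l p q : ℝ) : ℝ :=
  ∑ ℓ : Fin (ns + nl) → Bool,
    labelWeight ns nl p q ℓ *
      ((∑ σ : Equiv.Perm (Fin (ns + nl)), spjfWait ns nl s l ℓ σ)
        / (Nat.factorial (ns + nl) : ℝ))

/-- The closed-form four-term expression for the expected total waiting time
of shortest-predicted-job-first with misclassification probabilities `p`
(short predicted long) and `q` (long predicted short). -/
noncomputable def fourTerm (ns nl : ℕ) (s l p q : ℝ) : ℝ :=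
  (1 - p) * ns * ((1 - p) * ((ns : ℝ) - 1) / 2 * s + q * nl / 2 * l)
    + p * ns * ((1 - p) * ((ns : ℝ) - 1) * s + p * ((ns : ℝ) - 1) / 2 * s
        + (1 - q) * nl / 2 * l + q * nl * l)
    + (1 - q) * nl * ((1 - q) * ((nl : ℝ) - 1) / 2 * l + q * ((nl : ℝ) - 1) * l
        + p * ns / 2 * s + (1 - p) * ns * s)
    + q * nl * (q * ((nl : ℝ) - 1) / 2 * l + (1 - p) * ns / 2 * s)

open Finset

section PermutationSymmetry

variable {ι : Type*} [Fintype ι] [DecidableEq ι] [LinearOrder ι]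

theorem two_mul_card_perm_apply_lt {i j : ι} (hij : i ≠ j) :
    2 * #{σ : Equiv.Perm ι | σ i < σ j} = (Fintype.card ι).factorial := by
  have hswap : #{σ : Equiv.Perm ι | σ j < σ i} = #{σ : Equiv.Perm ι | σ i < σ j} :=
    card_equiv (Equiv.mulRight (Equiv.swap i j)) fun σ => by simp [Equiv.Perm.mul_apply]
  have hcompl : ∀ σ : Equiv.Perm ι, ¬σ i < σ j ↔ σ j < σ i := fun σ =>
    not_lt.trans (σ.injective.ne hij).symm.le_iff_lt
  have hsplit := card_filter_add_card_filter_not (s := univ) fun σ : Equiv.Perm ι => σ i < σ j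
  simp only [hcompl, hswap, card_univ, Fintype.card_perm] at hsplit
  omega

theorem card_perm_precedes (ℓ : ι → Bool) {i j : ι} (hij : i ≠ j) :
    (#{σ : Equiv.Perm ι | (ℓ i = false ∧ ℓ j = true) ∨ (ℓ i = ℓ j ∧ σ i < σ j)} : ℝ)
      = (Fintype.card ι).factorial * ((1 + ((ℓ j).toNat : ℝ) - (ℓ i).toNat) / 2) := by
  have half : (#{σ : Equiv.Perm ι | σ i < σ j} : ℝ) = (Fintype.card ι).factorial / 2 := by
    rw [← two_mul_card_perm_apply_lt hij]; push_cast; ring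
  cases hi : ℓ i <;> cases hj : ℓ j <;> simp [half, card_univ, Fintype.card_perm] <;> ring

theorem sum_perm_sum_filter_precedes (t : ι → ℝ) (ℓ : ι → Bool) :
    ∑ σ : Equiv.Perm ι, ∑ j, ∑ i ∈ univ.filter
        (fun i => (ℓ i = false ∧ ℓ j = true) ∨ (ℓ i = ℓ j ∧ σ i < σ j)), t i
      = (Fintype.card ι).factorial * ∑ j, ∑ i,
          t i * (if i = j then 0 else (1 + ((ℓ j).toNat : ℝ) - (ℓ i).toNat) / 2) := by
  simp_rw [sum_filter]
  rw [sum_comm, mul_sum]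
  refine sum_congr rfl fun j _ => ?_
  rw [sum_comm, mul_sum]
  refine sum_congr rfl fun i _ => ?_
  rw [← sum_filter, sum_const, nsmul_eq_mul]
  by_cases hij : i = j
  · subst hij; simp
  · rw [card_perm_precedes ℓ hij, if_neg hij]; ring

end PermutationSymmetry

theorem sum_pi_prod_mul_apply {ι κ R : Type*} [Fintype ι] [DecidableEq ι] [Fintype κ]
    [CommSemiring R] (w : ι → κ → R) (hw : ∀ k, ∑ b, w k b = 1) (i : ι) (f : κ → R) :
    ∑ ℓ : ι → κ, (∏ k, w k (ℓ k)) * f (ℓ i) = ∑ b, w i b * f b := by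
  have hfactor : ∀ ℓ : ι → κ, (∏ k, w k (ℓ k)) * f (ℓ i)
      = ∏ k, w k (ℓ k) * (if k = i then f (ℓ k) else 1) := fun ℓ => by
    rw [prod_mul_distrib, prod_ite_eq' univ i, if_pos (mem_univ i)]
  have hmarginal : ∀ k, ∑ b, w k b * (if k = i then f b else 1)
      = if k = i then ∑ b, w i b * f b else 1 := fun k => by
    by_cases hk : k = i
    · subst hk; simp
    · simp [hk, hw]
  simp_rw [hfactor]
  rw [← Fintype.prod_sum fun k b => w k b * if k = i then f b else 1]
  simp_rw [hmarginal]
  simp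

section TwoTypeModel

variable (ns nl : ℕ) (s l p q : ℝ)

/-- `labelWeight` is the product of these per-job laws. -/
noncomputable def labelProb (k : Fin (ns + nl)) (b : Bool) : ℝ :=
  if (k : ℕ) < ns then (if b then p else 1 - p) else (if b then 1 - q else q)

noncomputable def longProb (k : Fin (ns + nl)) : ℝ :=
  if (k : ℕ) < ns then p else 1 - q

theorem sum_labelWeight_mul_apply (f : Bool → ℝ) (i : Fin (ns + nl)) :
    ∑ ℓ, labelWeight ns nl p q ℓ * f (ℓ i) = ∑ b, labelProb ns nl p q i b * f b :=
  sum_pi_prod_mul_apply (labelProb ns nl p q) (fun k => by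
    by_cases hk : (k : ℕ) < ns <;> simp [labelProb, hk]) i f

theorem sum_labelWeight_mul_precedes (i j : Fin (ns + nl)) :
    ∑ ℓ, labelWeight ns nl p q ℓ * ((1 + ((ℓ j).toNat : ℝ) - (ℓ i).toNat) / 2)
      = (1 + longProb ns nl p q j - longProb ns nl p q i) / 2 := by
  have hexpand : ∀ ℓ : Fin (ns + nl) → Bool,
      labelWeight ns nl p q ℓ * ((1 + ((ℓ j).toNat : ℝ) - (ℓ i).toNat) / 2)
        = (labelWeight ns nl p q ℓ * 1 + labelWeight ns nl p q ℓ * (ℓ j).toNat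
          - labelWeight ns nl p q ℓ * (ℓ i).toNat) / 2 := fun ℓ => by
    ring
  rw [sum_congr rfl fun ℓ _ => hexpand ℓ, ← sum_div, sum_sub_distrib, sum_add_distrib,
    sum_labelWeight_mul_apply _ _ _ _ (fun _ => 1) i,
    sum_labelWeight_mul_apply _ _ _ _ (fun b => (b.toNat : ℝ)) j,
    sum_labelWeight_mul_apply _ _ _ _ (fun b => (b.toNat : ℝ)) i]
  by_cases hi : (i : ℕ) < ns <;> by_cases hj : (j : ℕ) < ns <;>
    simp [labelProb, longProb, hi, hj]

theorem spjfExpectedWait_eq_sum_pairs :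
    spjfExpectedWait ns nl s l p q = ∑ j, ∑ i, jobTime ns nl s l i *
      (if i = j then 0 else (1 + longProb ns nl p q j - longProb ns nl p q i) / 2) := by
  have hfac : ((ns + nl).factorial : ℝ) ≠ 0 := by positivity
  simp_rw [spjfExpectedWait, spjfWait, sum_perm_sum_filter_precedes, Fintype.card_fin,
    mul_div_cancel_left₀ _ hfac, mul_sum]
  rw [sum_comm]
  refine sum_congr rfl fun j _ => ?_
  rw [sum_comm]
  refine sum_congr rfl fun i _ => ?_
  split_ifs
  · simp
  · simp_rw [mul_left_comm _ (jobTime ns nl s l i), ← mul_sum, sum_labelWeight_mul_precedes]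

theorem sum_pairs_eq_fourTerm :
    ∑ j, ∑ i, jobTime ns nl s l i *
      (if i = j then 0 else (1 + longProb ns nl p q j - longProb ns nl p q i) / 2)
      = fourTerm ns nl s l p q := by
  have hdiag : ∀ j : Fin (ns + nl), ∑ i, jobTime ns nl s l i *
      (if i = j then 0 else (1 + longProb ns nl p q j - longProb ns nl p q i) / 2)
        = ∑ i, jobTime ns nl s l i * ((1 + longProb ns nl p q j - longProb ns nl p q i) / 2)
          - jobTime ns nl s l j / 2 := fun j => by
    rw [← add_sum_erase _ _ (mem_univ j), ← add_sum_erase _ _ (mem_univ j),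
      sum_congr rfl fun i hi => by rw [if_neg (ne_of_mem_erase hi)]]
    simp only [if_pos]
    ring
  simp_rw [hdiag]
  simp [Fin.sum_univ_add, jobTime, longProb, fourTerm]
  ring

theorem fourTerm_eq :
    fourTerm ns nl s l p q
      = ns * (ns - 1 : ℝ) * s / 2 + nl * (nl - 1 : ℝ) * l / 2 + nl * ns * s
        + ns * nl * (l - s) * (p + q) / 2 := by
  unfold fourTerm; ring

theorem spjfExpectedWait_eq_fourTerm :
    spjfExpectedWait ns nl s l p q = fourTerm ns nl s l p q :=
  (spjfExpectedWait_eq_sum_pairs ns nl s l p q).trans (sum_pairs_eq_fourTerm ns nl s l p q)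

end TwoTypeModel

theorem spjf_expected_wait_general (ns nl : ℕ) (s l : ℝ) (hl : s < l) :
    (∀ p q : ℝ, 0 ≤ p → p ≤ 1 → 0 ≤ q → q ≤ 1 →
        spjfExpectedWait ns nl s l p q = fourTerm ns nl s l p q) ∧
    spjfExpectedWait ns nl s l 0 0
        = (ns : ℝ) * ((ns : ℝ) - 1) * s / 2 + (nl : ℝ) * ((nl : ℝ) - 1) * l / 2
          + (nl : ℝ) * (ns : ℝ) * s ∧
    (∀ p p' q : ℝ, 0 ≤ p → p ≤ p' → p' ≤ 1 → 0 ≤ q → q ≤ 1 →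
        spjfExpectedWait ns nl s l p q ≤ spjfExpectedWait ns nl s l p' q) ∧
    (∀ p q q' : ℝ, 0 ≤ p → p ≤ 1 → 0 ≤ q → q ≤ q' → q' ≤ 1 →
        spjfExpectedWait ns nl s l p q ≤ spjfExpectedWait ns nl s l p q') := by
  have hgap : 0 ≤ (ns : ℝ) * nl * (l - s) := by
    have := sub_nonneg.mpr hl.le
    positivity
  refine ⟨fun p q _ _ _ _ => spjfExpectedWait_eq_fourTerm ns nl s l p q, ?_, ?_, ?_⟩
  · rw [spjfExpectedWait_eq_fourTerm, fourTerm_eq]; ring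
  · intro p p' q _ hpp' _ _ _
    simp only [spjfExpectedWait_eq_fourTerm, fourTerm_eq]
    gcongr
  · intro p q q' _ _ _ hqq' _
    simp only [spjfExpectedWait_eq_fourTerm, fourTerm_eq]
    gcongr

/-- Shortest-predicted-job-first in the two-type model: its expected total
waiting time equals the four-term expression; when `p = q = 0` this is the
shortest-job-first optimum `ns(ns-1)s/2 + nl(nl-1)l/2 + nl·ns·s`; and the
expected waiting time is nondecreasing in `p` and in `q`. -/
theorem spjf_expected_wait (ns nl : ℕ) (s l : ℝ) (hs : 0 < s) (hl : s < l) :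
    (∀ p q : ℝ, 0 ≤ p → p ≤ 1 → 0 ≤ q → q ≤ 1 →
        spjfExpectedWait ns nl s l p q = fourTerm ns nl s l p q) ∧
    spjfExpectedWait ns nl s l 0 0
        = (ns : ℝ) * ((ns : ℝ) - 1) * s / 2 + (nl : ℝ) * ((nl : ℝ) - 1) * l / 2
          + (nl : ℝ) * (ns : ℝ) * s ∧
    (∀ p p' q : ℝ, 0 ≤ p → p ≤ p' → p' ≤ 1 → 0 ≤ q → q ≤ 1 →
        spjfExpectedWait ns nl s l p q ≤ spjfExpectedWait ns nl s l p' q) ∧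
    (∀ p q q' : ℝ, 0 ≤ p → p ≤ 1 → 0 ≤ q → q ≤ q' → q' ≤ 1 →
        spjfExpectedWait ns nl s l p q ≤ spjfExpectedWait ns nl s l p q') :=
  spjf_expected_wait_general ns nl s l hl
end

section
/- If job service times X are exponential with mean 1, and the prediction Y given X = x is exponential with mean x, then the price of misprediction for shortest-predicted-job-first on jobs released at time 0 equals 4/3: that is, ∫₀^∞ f_p(y) (∫₀^∞∫₀^y x g(x,z) dz dx) dy divided by ∫₀^∞ f_s(x)(∫₀^x z f_s(z) dz) dx equals 4/3. -/
open MeasureTheory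

/-- Joint density of (service time, predicted time): the service time is
exponential with mean 1 and, given service time `x`, the prediction is
exponential with mean `x`. -/
noncomputable def gExp (x y : ℝ) : ℝ := Real.exp (-x) * ((1 / x) * Real.exp (-y / x))

/-- Marginal density of the predicted service time. -/
noncomputable def fPred (y : ℝ) : ℝ := ∫ x in Set.Ioi (0 : ℝ), gExp x y

/-- Marginal density of the service time. -/
noncomputable def fServ (x : ℝ) : ℝ := Real.exp (-x)

/-! The inner integral `∫₀^y x g(x,z) dz` is `x e^{-x} (1 - e^{-y/x})`. By Tonelli the numerator
becomes `∫∫ (∫ g(a,y) b e^{-b} (1 - e^{-y/b}) dy) da db = ∫∫ ab/(a+b) e^{-(a+b)} da db`, and the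
identity `ab/(a+b) e^{-(a+b)} = ∫₁^∞ a e^{-ta} b e^{-tb} dt` turns this into
`∫₁^∞ (t⁻²)² dt = 1/3`. The denominator is `∫₀^∞ e^{-x} (1 - (x+1) e^{-x}) dx = 1/4`. -/

open Real Set ENNReal

theorem integrableOn_exp_neg_mul_Ioi {c : ℝ} (hc : 0 < c) (a : ℝ) :
    IntegrableOn (fun x => exp (-(c * x))) (Ioi a) := by
  simpa only [neg_mul] using integrableOn_exp_mul_Ioi (neg_neg_of_pos hc) a

theorem integral_exp_neg_mul_Ioi {c : ℝ} (hc : 0 < c) (a : ℝ) :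
    ∫ x in Ioi a, exp (-(c * x)) = exp (-(c * a)) / c := by
  simpa only [neg_mul, neg_div_neg_eq] using integral_exp_mul_Ioi (neg_neg_of_pos hc) a

theorem integral_exp_neg_mul_Ioo {c : ℝ} (hc : c ≠ 0) {y : ℝ} (hy : 0 ≤ y) :
    ∫ z in Ioo 0 y, exp (-(c * z)) = (1 - exp (-(c * y))) / c := by
  have hderiv (z : ℝ) : HasDerivAt (fun z => -exp (-(c * z)) / c) (exp (-(c * z))) z :=
    ((hasDerivAt_id' z).const_mul c).fun_neg.exp.fun_neg.div_const c |>.congr_deriv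
      (by field_simp)
  rw [← integral_Ioc_eq_integral_Ioo, ← intervalIntegral.integral_of_le hy,
    intervalIntegral.integral_eq_sub_of_hasDerivAt (fun z _ => hderiv z)
      ((by fun_prop : Continuous fun z => exp (-(c * z))).intervalIntegrable _ _)]
  simp only [mul_zero, neg_zero, exp_zero]
  ring

theorem integral_mul_exp_neg_Ioo {x : ℝ} (hx : 0 ≤ x) :
    ∫ z in Ioo 0 x, z * exp (-z) = 1 - (x + 1) * exp (-x) := by
  have hderiv (z : ℝ) : HasDerivAt (fun z => -(z + 1) * exp (-z)) (z * exp (-z)) z :=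
    ((hasDerivAt_id' z).add_const 1).fun_neg.fun_mul (hasDerivAt_id' z).fun_neg.exp |>.congr_deriv
      (by ring)
  rw [← integral_Ioc_eq_integral_Ioo, ← intervalIntegral.integral_of_le hx,
    intervalIntegral.integral_eq_sub_of_hasDerivAt (fun z _ => hderiv z)
      ((by fun_prop : Continuous fun z => z * exp (-z)).intervalIntegrable _ _)]
  simp only [zero_add, neg_zero, exp_zero]
  ring

theorem integrableOn_mul_exp_neg_mul_Ioi {c : ℝ} (hc : 0 < c) :
    IntegrableOn (fun x => x * exp (-(c * x))) (Ioi 0) := by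
  simpa using integrableOn_rpow_mul_exp_neg_mul_rpow (s := 1) (p := 1) (by norm_num) one_pos hc

theorem integral_mul_exp_neg_mul_Ioi {c : ℝ} (hc : 0 < c) :
    ∫ x in Ioi 0, x * exp (-(c * x)) = (c ^ 2)⁻¹ := by
  simpa [show (2 : ℝ) - 1 = 1 by norm_num] using integral_rpow_mul_exp_neg_mul_Ioi two_pos hc

theorem lintegral_mul_exp_neg_mul_Ioi {c : ℝ} (hc : 0 < c) :
    ∫⁻ x in Ioi 0, ENNReal.ofReal (x * exp (-(c * x))) = ENNReal.ofReal (c ^ 2)⁻¹ := by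
  rw [← integral_mul_exp_neg_mul_Ioi hc, ofReal_integral_eq_lintegral_ofReal
    (integrableOn_mul_exp_neg_mul_Ioi hc)
    (ae_restrict_of_forall_mem measurableSet_Ioi fun x hx => mul_nonneg hx.le (exp_pos _).le)]

theorem lintegral_lintegral_lintegral_mul {α β γ : Type*} [MeasurableSpace α]
    [MeasurableSpace β] [MeasurableSpace γ] {μ : Measure α} {ν : Measure β} {ρ : Measure γ}
    [SFinite μ] [SFinite ν] [SFinite ρ] {f : α → γ → ℝ≥0∞} {g : β → γ → ℝ≥0∞}
    (hf : Measurable (Function.uncurry f)) (hg : Measurable (Function.uncurry g)) :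
    ∫⁻ a, ∫⁻ b, ∫⁻ t, f a t * g b t ∂ρ ∂ν ∂μ = ∫⁻ t, (∫⁻ a, f a t ∂μ) * ∫⁻ b, g b t ∂ν ∂ρ := by
  have hf' : Measurable fun p : α × γ => f p.1 p.2 := hf
  have hg' : Measurable fun p : β × γ => g p.1 p.2 := hg
  calc ∫⁻ a, ∫⁻ b, ∫⁻ t, f a t * g b t ∂ρ ∂ν ∂μ
      = ∫⁻ a, ∫⁻ t, ∫⁻ b, f a t * g b t ∂ν ∂ρ ∂μ :=
        lintegral_congr fun a => lintegral_lintegral_swap (by fun_prop)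
    _ = ∫⁻ t, ∫⁻ a, ∫⁻ b, f a t * g b t ∂ν ∂μ ∂ρ :=
        lintegral_lintegral_swap (Measurable.aemeasurable
          (Measurable.lintegral_prod_right'
            (f := fun p : (α × γ) × β => f p.1.1 p.1.2 * g p.2 p.1.2) (by fun_prop)))
    _ = ∫⁻ t, (∫⁻ a, f a t ∂μ) * ∫⁻ b, g b t ∂ν ∂ρ := by
        refine lintegral_congr fun t => ?_
        rw [← lintegral_mul_const'' _ (by fun_prop)]
        exact lintegral_congr fun a => lintegral_const_mul'' _ (by fun_prop)

theorem ofReal_mul_div_add_mul_exp_eq_lintegral {a b : ℝ} (ha : 0 < a) (hb : 0 < b) :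
    ENNReal.ofReal (a * b / (a + b) * exp (-(a + b))) =
      ∫⁻ t in Ioi 1,
        ENNReal.ofReal (a * exp (-(t * a))) * ENNReal.ofReal (b * exp (-(t * b))) := by
  have hab : 0 < a + b := by positivity
  have hsplit (t : ℝ) :
      a * exp (-(t * a)) * (b * exp (-(t * b))) = a * b * exp (-((a + b) * t)) := by
    rw [← mul_mul_mul_comm, ← exp_add]; ring_nf
  simp_rw [← ENNReal.ofReal_mul (mul_nonneg ha.le (exp_pos _).le), hsplit]
  rw [← ofReal_integral_eq_lintegral_ofReal ((integrableOn_exp_neg_mul_Ioi hab 1).const_mul _)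
    (.of_forall fun t => by positivity), integral_const_mul, integral_exp_neg_mul_Ioi hab, mul_one]
  ring_nf

theorem lintegral_lintegral_mul_div_add_mul_exp :
    ∫⁻ a in Ioi 0, ∫⁻ b in Ioi 0, ENNReal.ofReal (a * b / (a + b) * exp (-(a + b))) =
      ENNReal.ofReal (1 / 3) := by
  set f : ℝ → ℝ → ℝ≥0∞ := fun a t => ENNReal.ofReal (a * exp (-(t * a)))
  have hf : Measurable (Function.uncurry f) := by unfold f Function.uncurry; fun_prop
  have hrpow {t : ℝ} (ht : 1 < t) : (t ^ 2)⁻¹ * (t ^ 2)⁻¹ = t ^ (-4 : ℝ) := by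
    rw [rpow_neg (by positivity)]; norm_num; ring
  calc ∫⁻ a in Ioi 0, ∫⁻ b in Ioi 0, ENNReal.ofReal (a * b / (a + b) * exp (-(a + b)))
      = ∫⁻ a in Ioi 0, ∫⁻ b in Ioi 0, ∫⁻ t in Ioi 1, f a t * f b t :=
        setLIntegral_congr_fun measurableSet_Ioi fun a ha =>
          setLIntegral_congr_fun measurableSet_Ioi fun b hb =>
            ofReal_mul_div_add_mul_exp_eq_lintegral ha hb
    _ = ∫⁻ t in Ioi 1, (∫⁻ a in Ioi 0, f a t) * ∫⁻ b in Ioi 0, f b t :=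
        lintegral_lintegral_lintegral_mul hf hf
    _ = ∫⁻ t in Ioi 1, ENNReal.ofReal (t ^ (-4 : ℝ)) := by
        refine setLIntegral_congr_fun measurableSet_Ioi fun t ht => ?_
        simp only [f, lintegral_mul_exp_neg_mul_Ioi (zero_lt_one.trans ht)]
        rw [← ENNReal.ofReal_mul (by positivity), hrpow ht]
    _ = ENNReal.ofReal (1 / 3) := by
        rw [← ofReal_integral_eq_lintegral_ofReal
          (integrableOn_Ioi_rpow_of_lt (by norm_num) zero_lt_one)
          (ae_restrict_of_forall_mem measurableSet_Ioi fun t ht =>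
            rpow_nonneg (zero_lt_one.trans ht).le _),
          integral_Ioi_rpow_of_lt (by norm_num) zero_lt_one]
        norm_num

theorem gExp_nonneg {x : ℝ} (hx : 0 < x) (y : ℝ) : 0 ≤ gExp x y := by
  rw [gExp]; positivity

-- `x f_s(x) P(Y < y | X = x)`
noncomputable def weightedPredCDF (x y : ℝ) : ℝ := x * exp (-x) * (1 - exp (-(y / x)))

theorem integral_mul_gExp_Ioo {x y : ℝ} (hx : 0 < x) (hy : 0 ≤ y) :
    ∫ z in Ioo 0 y, x * gExp x z = weightedPredCDF x y := by
  have h (z : ℝ) : x * gExp x z = exp (-x) * exp (-(x⁻¹ * z)) := by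
    rw [gExp]; field_simp
  simp_rw [h]
  rw [integral_const_mul, integral_exp_neg_mul_Ioo (inv_ne_zero hx.ne') hy, weightedPredCDF]
  field_simp

theorem weightedPredCDF_nonneg {x y : ℝ} (hx : 0 < x) (hy : 0 ≤ y) :
    0 ≤ weightedPredCDF x y := by
  have h : exp (-(y / x)) ≤ 1 := exp_le_one_iff.2 (neg_nonpos.2 (by positivity))
  rw [weightedPredCDF]
  exact mul_nonneg (by positivity) (sub_nonneg.2 h)

theorem gExp_mul_weightedPredCDF {a b : ℝ} (ha : 0 < a) (hb : 0 < b) (y : ℝ) :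
    gExp a y * weightedPredCDF b y = exp (-a) * b * exp (-b) / a *
      (exp (-(a⁻¹ * y)) - exp (-((a⁻¹ + b⁻¹) * y))) := by
  rw [gExp, weightedPredCDF, add_mul, neg_add, exp_add]
  field_simp

theorem lintegral_gExp_mul_weightedPredCDF {a b : ℝ} (ha : 0 < a) (hb : 0 < b) :
    ∫⁻ y in Ioi 0, ENNReal.ofReal (gExp a y) * ENNReal.ofReal (weightedPredCDF b y) =
      ENNReal.ofReal (a * b / (a + b) * exp (-(a + b))) := by
  have hsum : 0 < a⁻¹ + b⁻¹ := by positivity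
  have hdiff := (integrableOn_exp_neg_mul_Ioi (inv_pos.2 ha) 0).fun_sub
    (integrableOn_exp_neg_mul_Ioi hsum 0)
  have hprod : IntegrableOn (fun y => gExp a y * weightedPredCDF b y) (Ioi 0) :=
    IntegrableOn.congr_fun (hdiff.const_mul _)
      (fun y _ => (gExp_mul_weightedPredCDF ha hb y).symm) measurableSet_Ioi
  simp_rw [← ENNReal.ofReal_mul (gExp_nonneg ha _)]
  rw [← ofReal_integral_eq_lintegral_ofReal hprod (ae_restrict_of_forall_mem measurableSet_Ioi
    fun y hy => mul_nonneg (gExp_nonneg ha y) (weightedPredCDF_nonneg hb hy.le)),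
    setIntegral_congr_fun measurableSet_Ioi fun y _ => gExp_mul_weightedPredCDF ha hb y,
    integral_const_mul, integral_sub (integrableOn_exp_neg_mul_Ioi (inv_pos.2 ha) 0)
    (integrableOn_exp_neg_mul_Ioi hsum 0), integral_exp_neg_mul_Ioi (inv_pos.2 ha),
    integral_exp_neg_mul_Ioi hsum]
  congr 1
  simp only [mul_zero, neg_zero, exp_zero, neg_add, exp_add]
  field_simp
  ring

theorem predicted_information_delay :
    ∫ y in Ioi 0, fPred y * ∫ x in Ioi 0, ∫ z in Ioo 0 y, x * gExp x z = 1 / 3 := by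
  set G : ℝ → ℝ → ℝ≥0∞ := fun a y => ENNReal.ofReal (gExp a y)
  set W : ℝ → ℝ → ℝ≥0∞ := fun b y => ENNReal.ofReal (weightedPredCDF b y)
  have hG : Measurable (Function.uncurry G) := by
    unfold G Function.uncurry gExp; fun_prop
  have hW : Measurable (Function.uncurry W) := by
    unfold W Function.uncurry weightedPredCDF; fun_prop
  set F : ℝ → ℝ≥0∞ := fun y => (∫⁻ a in Ioi 0, G a y) * ∫⁻ b in Ioi 0, W b y
  -- Tonelli in `ℝ≥0∞` needs no integrability, and `hF` then makes `F` finite a.e.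
  have hFm : Measurable F := hG.lintegral_prod_left'.mul hW.lintegral_prod_left'
  have hF : ∫⁻ y in Ioi 0, F y = ENNReal.ofReal (1 / 3) := by
    rw [← lintegral_lintegral_lintegral_mul hG hW, ← lintegral_lintegral_mul_div_add_mul_exp]
    exact setLIntegral_congr_fun measurableSet_Ioi fun a ha =>
      setLIntegral_congr_fun measurableSet_Ioi fun b hb => lintegral_gExp_mul_weightedPredCDF ha hb
  have hintegrand : EqOn (fun y => fPred y * ∫ x in Ioi 0, ∫ z in Ioo 0 y, x * gExp x z)
      (fun y => (F y).toReal) (Ioi 0) := by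
    intro y hy
    dsimp only [F, G, W]
    rw [toReal_mul, fPred, integral_eq_lintegral_of_nonneg_ae
        (ae_restrict_of_forall_mem measurableSet_Ioi fun x hx => gExp_nonneg hx y)
        (by unfold gExp; fun_prop),
      setIntegral_congr_fun measurableSet_Ioi fun x hx => integral_mul_gExp_Ioo hx (le_of_lt hy),
      integral_eq_lintegral_of_nonneg_ae
        (ae_restrict_of_forall_mem measurableSet_Ioi fun x hx => weightedPredCDF_nonneg hx hy.le)
        (by unfold weightedPredCDF; fun_prop)]
  rw [setIntegral_congr_fun measurableSet_Ioi hintegrand, integral_toReal hFm.aemeasurable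
    (ae_lt_top' hFm.aemeasurable (hF ▸ ofReal_ne_top)), hF, toReal_ofReal (by norm_num)]

theorem full_information_delay :
    ∫ x in Ioi 0, fServ x * ∫ z in Ioo 0 x, z * fServ z = 1 / 4 := by
  have hintegrand : EqOn (fun x => fServ x * ∫ z in Ioo 0 x, z * fServ z)
      (fun x => exp (-(1 * x)) - x * exp (-(2 * x)) - exp (-(2 * x))) (Ioi 0) := by
    intro x hx
    simp only [fServ, integral_mul_exp_neg_Ioo (le_of_lt hx)]
    rw [show 2 * x = x + x by ring, neg_add, exp_add, one_mul]
    ring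
  rw [setIntegral_congr_fun measurableSet_Ioi hintegrand,
    integral_sub ((integrableOn_exp_neg_mul_Ioi one_pos 0).fun_sub
      (integrableOn_mul_exp_neg_mul_Ioi two_pos)) (integrableOn_exp_neg_mul_Ioi two_pos 0),
    integral_sub (integrableOn_exp_neg_mul_Ioi one_pos 0)
      (integrableOn_mul_exp_neg_mul_Ioi two_pos),
    integral_exp_neg_mul_Ioi one_pos, integral_exp_neg_mul_Ioi two_pos,
    integral_mul_exp_neg_mul_Ioi two_pos]
  norm_num

/-- Price of misprediction for shortest-predicted-job-first with
exponential(1) service times and predictions that are exponential with mean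
equal to the true service time: the ratio of the predicted-information
expected pairwise delay `∫₀^∞ f_p(y) (∫₀^∞ ∫₀^y x·g(x,z) dz dx) dy` to the
full-information one `∫₀^∞ f_s(x) (∫₀^x z·f_s(z) dz) dx` equals `4/3`. -/
theorem price_of_misprediction_exponential :
    (∫ y in Set.Ioi (0 : ℝ),
        fPred y * ∫ x in Set.Ioi (0 : ℝ), ∫ z in Set.Ioo (0 : ℝ) y, x * gExp x z)
      / (∫ x in Set.Ioi (0 : ℝ), fServ x * ∫ z in Set.Ioo (0 : ℝ) x, z * fServ z)
      = 4 / 3 := by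
  rw [predicted_information_delay, full_information_delay]
  norm_num
end
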